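/- Let G be a group acting by automorphisms on a simplicial tree T, let v be a vertex of T, and let X be a generating set of G such that d_T(v, x·v) ≤ 1 for all x ∈ X ∪ X^{-1}, where d_T is the graph metric on T. Suppose the stabilizer Stab_G(v) is finite. Then the Cayley graph Cay(G,X) is δ-hyperbolic for δ = 2·Rad_X(Stab_G(v)), where Rad_X(S) = max{|g|_X : g ∈ S} and |g|_X is the word length of g with respect to X. -/

import Mathlib

/-!
The orbit map `g ↦ g • v` sends every edge of `Cay(G,X)` to an edge or a vertex of `T`, and its
fibres are cosets of `Stab_G(v)`, so two vertices of `Cay(G,X)` with the same image are at most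
`R = Rad_X(Stab_G(v))` apart. Let `x` be a vertex on the side `[a,b]` of a geodesic triangle
`abc`, and let `m` be the median in `T` of the images of `a`, `b` and `x`. The image of the side
`[a,b]` is a chain of adjacent vertices, so it passes through `m` both before and after `x`; these
two passages are at most `R` apart along the geodesic, hence `x` is within `R` of a vertex `y`
over `m`. As `m` lies on the geodesic of `T` from the image of `a` to that of `c` or on the one
from `c` to `b`, the image of another side passes through `m` too, at a vertex within `R` of `y`.
-/

open Function

namespace IsoSpecPaper

variable {G : Type*} [Group G]

/-- The word length of `g` with respect to the (symmetrized) generating set `X ⊆ G`. -/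
noncomputable def wlenSet (X : Set G) (g : G) : ℕ :=
  sInf {n | ∃ L : List G, L.length = n ∧ (∀ x ∈ L, x ∈ X ∨ x⁻¹ ∈ X) ∧ L.prod = g}

/-- The word metric on `G` with respect to the generating set `X`. -/
noncomputable def wdistSet (X : Set G) (g h : G) : ℕ := wlenSet X (g⁻¹ * h)

/-- A (combinatorial) geodesic path of length `n` in the Cayley graph `Cay(G,X)`. -/
noncomputable def IsGeodesicSet (X : Set G) {n : ℕ} (p : Fin (n + 1) → G) : Prop :=
  (∀ i : Fin n, wdistSet X (p i.castSucc) (p i.succ) ≤ 1) ∧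
  wdistSet X (p 0) (p (Fin.last n)) = n

/-- Every vertex of the path `p` lies within distance `δ` of the set `A`. -/
noncomputable def ThinAtSet (X : Set G) (δ : ℝ) {n : ℕ}
    (p : Fin (n + 1) → G) (A : Set G) : Prop :=
  ∀ i, ∃ a ∈ A, (wdistSet X (p i) a : ℝ) ≤ δ

/-- The Cayley graph `Cay(G,X)` is `δ`-hyperbolic: all geodesic triangles are `δ`-thin. -/
noncomputable def HypConstSet (X : Set G) (δ : ℝ) : Prop :=
  ∀ (n₁ n₂ n₃ : ℕ) (p : Fin (n₁ + 1) → G) (q : Fin (n₂ + 1) → G) (r : Fin (n₃ + 1) → G),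
    IsGeodesicSet X p → IsGeodesicSet X q → IsGeodesicSet X r →
    p (Fin.last n₁) = q 0 → q (Fin.last n₂) = r 0 → r (Fin.last n₃) = p 0 →
    ThinAtSet X δ p (Set.range q ∪ Set.range r) ∧
    ThinAtSet X δ q (Set.range r ∪ Set.range p) ∧
    ThinAtSet X δ r (Set.range p ∪ Set.range q)

/-- The radius of a subset `S ⊆ G` with respect to the generating set `X`. -/
noncomputable def RadSet (X : Set G) (S : Set G) : ℕ := sSup (wlenSet X '' S)

end IsoSpecPaper

namespace SimpleGraph

variable {V : Type*} {G : SimpleGraph V} {a b m u w : V}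

/-- In a tree: `m` lies on the geodesic from `a` to `b`. -/
def Between (G : SimpleGraph V) (a m b : V) : Prop := ∀ W : G.Walk a b, m ∈ W.support

theorem Between.left (a b : V) : G.Between a a b := fun W => W.start_mem_support

theorem Between.symm (h : G.Between a m b) : G.Between b m a := fun W => by
  simpa using h W.reverse

theorem Between.trans (h : G.Between a m b) (h' : G.Between m w b) : G.Between a w b :=
  fun W => by
    classical
    exact W.support_dropUntil_subset_support (h W) (h' _)

theorem Between.or_between (h : G.Between a m b) (c : V) :
    G.Between a m c ∨ G.Between c m b := by
  by_contra! hc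
  simp only [Between, not_forall] at hc
  obtain ⟨⟨W₁, h₁⟩, W₂, h₂⟩ := hc
  exact (W₁.mem_support_append_iff W₂).not.mpr (by tauto) (h _)

theorem Between.exists_eq_of_chain {n : ℕ} {s : Fin (n + 1) → V}
    (hs : ∀ k : Fin n, s k.castSucc = s k.succ ∨ G.Adj (s k.castSucc) (s k.succ))
    {i j : Fin (n + 1)} (hij : i ≤ j) (hm : G.Between (s i) m (s j)) :
    ∃ k, i ≤ k ∧ k ≤ j ∧ s k = m := by
  have of_self : ∀ {x}, G.Between x m x → m = x := fun h => by simpa using h Walk.nil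
  induction j using Fin.induction with
  | zero => exact ⟨i, le_rfl, hij, (of_self (Fin.le_zero_iff.mp hij ▸ hm)).symm⟩
  | succ j ih =>
    rcases hij.eq_or_lt with rfl | hlt
    · exact ⟨_, le_rfl, le_rfl, (of_self hm).symm⟩
    rcases hm.or_between (s j.castSucc) with h | h
    · obtain ⟨k, hik, hkj, hk⟩ := ih (Fin.le_castSucc_iff.mpr hlt) h
      exact ⟨k, hik, hkj.trans (Fin.castSucc_le_succ j), hk⟩
    have hm' : m = s j.castSucc ∨ m = s j.succ := by
      rcases hs j with heq | hadj
      · exact Or.inl (of_self (heq ▸ h))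
      · simpa using h (Walk.cons hadj Walk.nil)
    rcases hm' with rfl | rfl
    · exact ⟨_, Fin.le_castSucc_iff.mpr hlt, Fin.castSucc_le_succ j, rfl⟩
    · exact ⟨_, hij, le_rfl, rfl⟩

theorem IsAcyclic.between_of_mem_support (hG : G.IsAcyclic) {P : G.Walk a b} (hP : P.IsPath)
    (hm : m ∈ P.support) : G.Between a m b := fun W => by
  classical
  have hW : W.bypass = P :=
    congrArg Subtype.val ((hG.subsingleton_path a b).elim ⟨_, W.bypass_isPath⟩ ⟨P, hP⟩)
  exact W.support_bypass_subset_support (hW ▸ hm)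

theorem IsAcyclic.between_of_adj (hG : G.IsAcyclic) (h : G.Adj w u) (hw : ¬G.Between u w b) :
    G.Between w u b := fun W => by
  classical
  let P := (W.cons h.symm).toPath
  have hwP : w ∉ P.1.support := fun hw' => hw (hG.between_of_mem_support P.2 hw')
  have hpath : (Walk.cons h P.1).IsPath := P.2.cons hwP
  exact hG.between_of_mem_support hpath (by simp) W

/-- `m` is the first vertex of `Q` between `a` and `b`. -/
theorem IsAcyclic.exists_mem_support_between (hG : G.IsAcyclic) (b : V) (Q : G.Walk w a) :
    ∃ m ∈ Q.support, G.Between a m b ∧ G.Between w m b := by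
  induction Q with
  | nil => exact ⟨_, Walk.start_mem_support _, Between.left _ _, Between.left _ _⟩
  | @cons w u a h Q ih =>
    obtain ⟨m, hmQ, hmab, hmub⟩ := ih
    by_cases hw : G.Between a w b
    · exact ⟨w, Walk.start_mem_support _, hw, Between.left _ _⟩
    refine ⟨m, by simp [hmQ], hmab, fun W => ?_⟩
    have hm := hmub (W.cons h.symm)
    rw [Walk.support_cons, List.mem_cons] at hm
    rcases hm with rfl | hm
    · exact hG.between_of_adj h (fun hu => hw (hmab.trans hu)) W
    · exact hm

theorem IsTree.exists_median (hG : G.IsTree) (a b w : V) :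
    ∃ m, G.Between a m b ∧ G.Between a m w ∧ G.Between w m b := by
  obtain ⟨Q, hQ⟩ := (hG.existsUnique_path w a).exists
  obtain ⟨m, hmQ, hmab, hmwb⟩ := hG.isAcyclic.exists_mem_support_between b Q
  exact ⟨m, hmab, (hG.isAcyclic.between_of_mem_support hQ hmQ).symm, hmwb⟩

theorem Reachable.eq_or_adj_of_dist_le_one (hr : G.Reachable u w) (h : G.dist u w ≤ 1) :
    u = w ∨ G.Adj u w := by
  rcases Nat.le_one_iff_eq_zero_or_eq_one.mp h with h | h
  · exact Or.inl (hr.dist_eq_zero_iff.mp h)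
  · exact Or.inr (dist_eq_one_iff_adj.mp h)

end SimpleGraph

namespace IsoSpecPaper

variable {G : Type*} [Group G] {X : Set G}

theorem wlenSet_prod_le {L : List G} (hL : ∀ x ∈ L, x ∈ X ∨ x⁻¹ ∈ X) :
    wlenSet X L.prod ≤ L.length :=
  Nat.sInf_le ⟨L, rfl, hL, rfl⟩

theorem exists_length_eq_wlenSet (hgen : Subgroup.closure X = ⊤) (g : G) :
    ∃ L : List G, L.length = wlenSet X g ∧ (∀ x ∈ L, x ∈ X ∨ x⁻¹ ∈ X) ∧ L.prod = g := by
  have hg : g ∈ Submonoid.closure (X ∪ X⁻¹) := by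
    rw [← Subgroup.closure_toSubmonoid, hgen]
    trivial
  obtain ⟨L, hL, hprod⟩ := Submonoid.exists_list_of_mem_closure hg
  have hne : {n | ∃ L : List G, L.length = n ∧ (∀ x ∈ L, x ∈ X ∨ x⁻¹ ∈ X) ∧ L.prod = g}.Nonempty :=
    ⟨L.length, L, rfl, hL, hprod⟩
  exact Nat.sInf_mem hne

theorem wlenSet_mul_le (hgen : Subgroup.closure X = ⊤) (g h : G) :
    wlenSet X (g * h) ≤ wlenSet X g + wlenSet X h := by
  obtain ⟨L₁, hl₁, hL₁, rfl⟩ := exists_length_eq_wlenSet hgen g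
  obtain ⟨L₂, hl₂, hL₂, rfl⟩ := exists_length_eq_wlenSet hgen h
  rw [← hl₁, ← hl₂, ← List.length_append, ← List.prod_append]
  exact wlenSet_prod_le (List.forall_mem_append.mpr ⟨hL₁, hL₂⟩)

theorem wlenSet_inv_le (hgen : Subgroup.closure X = ⊤) (g : G) :
    wlenSet X g⁻¹ ≤ wlenSet X g := by
  obtain ⟨L, hl, hL, rfl⟩ := exists_length_eq_wlenSet hgen g
  rw [← hl, List.prod_inv_reverse, ← List.length_map (f := fun x : G => x⁻¹),
    ← List.length_reverse]
  refine wlenSet_prod_le fun x hx => ?_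
  obtain ⟨y, hy, rfl⟩ := List.mem_map.mp (List.mem_reverse.mp hx)
  simpa [or_comm] using hL y hy

theorem wdistSet_self (g : G) : wdistSet X g g = 0 :=
  Nat.le_zero.mp (by simpa [wdistSet] using wlenSet_prod_le (X := X) (L := []) (by simp))

theorem wdistSet_comm (hgen : Subgroup.closure X = ⊤) (g h : G) :
    wdistSet X g h = wdistSet X h g := by
  have key : ∀ g h : G, wdistSet X g h ≤ wdistSet X h g := fun g h => by
    simpa [wdistSet] using wlenSet_inv_le hgen (h⁻¹ * g)
  exact (key g h).antisymm (key h g)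

theorem wdistSet_triangle (hgen : Subgroup.closure X = ⊤) (g h k : G) :
    wdistSet X g k ≤ wdistSet X g h + wdistSet X h k := by
  simpa only [wdistSet, mul_assoc, mul_inv_cancel_left] using
    wlenSet_mul_le hgen (g⁻¹ * h) (h⁻¹ * k)

theorem eq_or_exists_eq_mul_of_wdistSet_le_one (hgen : Subgroup.closure X = ⊤) {g h : G}
    (hgh : wdistSet X g h ≤ 1) : h = g ∨ ∃ x, (x ∈ X ∨ x⁻¹ ∈ X) ∧ h = g * x := by
  obtain ⟨L, hl, hL, hprod⟩ := exists_length_eq_wlenSet hgen (g⁻¹ * h)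
  rw [wdistSet, ← hl] at hgh
  rcases L with _ | ⟨x, _ | ⟨y, L⟩⟩
  · left
    simpa [eq_comm, inv_mul_eq_one] using hprod
  · right
    refine ⟨x, hL x (List.mem_singleton_self x), ?_⟩
    rw [List.prod_singleton] at hprod
    rw [hprod, mul_inv_cancel_left]
  · simp at hgh

theorem wdistSet_le_sub_of_step_le_one (hgen : Subgroup.closure X = ⊤) {n : ℕ}
    {p : Fin (n + 1) → G} (hp : ∀ k : Fin n, wdistSet X (p k.castSucc) (p k.succ) ≤ 1)
    {i j : Fin (n + 1)} (hij : i ≤ j) : wdistSet X (p i) (p j) ≤ j - i := by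
  induction j using Fin.induction with
  | zero => simp [Fin.le_zero_iff.mp hij, wdistSet_self]
  | succ j ih =>
    rcases hij.eq_or_lt with rfl | hlt
    · simp [wdistSet_self]
    have hij' : i ≤ j.castSucc := Fin.le_castSucc_iff.mpr hlt
    have := wdistSet_triangle hgen (p i) (p j.castSucc) (p j.succ)
    have := ih hij'
    have := hp j
    rw [Fin.le_iff_val_le_val, Fin.val_castSucc] at hij'
    simp only [Fin.val_succ, Fin.val_castSucc] at *
    omega

theorem IsGeodesicSet.wdistSet_eq (hgen : Subgroup.closure X = ⊤) {n : ℕ}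
    {p : Fin (n + 1) → G} (hp : IsGeodesicSet X p) {i j : Fin (n + 1)} (hij : i ≤ j) :
    wdistSet X (p i) (p j) = j - i := by
  have h₀ := wdistSet_le_sub_of_step_le_one hgen hp.1 (Fin.zero_le i)
  have h₁ := wdistSet_le_sub_of_step_le_one hgen hp.1 hij
  have h₂ := wdistSet_le_sub_of_step_le_one hgen hp.1 (Fin.le_last j)
  have t₁ := wdistSet_triangle hgen (p 0) (p i) (p (Fin.last n))
  have t₂ := wdistSet_triangle hgen (p i) (p j) (p (Fin.last n))
  have hn := hp.2
  rw [Fin.le_iff_val_le_val] at hij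
  simp only [Fin.val_zero, Fin.val_last] at *
  omega

section TreeProjection

variable {V : Type*} {T : SimpleGraph V} {π : G → V} {R : ℕ}

theorem exists_eq_of_between_of_step_le_one
    (hπ : ∀ g h, wdistSet X g h ≤ 1 → π g = π h ∨ T.Adj (π g) (π h)) {n : ℕ}
    {p : Fin (n + 1) → G} (hp : ∀ k : Fin n, wdistSet X (p k.castSucc) (p k.succ) ≤ 1)
    {i j : Fin (n + 1)} (hij : i ≤ j) {m : V} (hm : T.Between (π (p i)) m (π (p j))) :
    ∃ k, i ≤ k ∧ k ≤ j ∧ π (p k) = m :=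
  hm.exists_eq_of_chain (s := π ∘ p) (fun k => hπ _ _ (hp k)) hij

theorem IsGeodesicSet.exists_eq_wdistSet_le (hgen : Subgroup.closure X = ⊤)
    (hπ : ∀ g h, wdistSet X g h ≤ 1 → π g = π h ∨ T.Adj (π g) (π h))
    (hfib : ∀ g h, π g = π h → wdistSet X g h ≤ R) {n : ℕ} {p : Fin (n + 1) → G}
    (hp : IsGeodesicSet X p) (i : Fin (n + 1)) {m : V}
    (h₁ : T.Between (π (p 0)) m (π (p i))) (h₂ : T.Between (π (p i)) m (π (p (Fin.last n)))) :
    ∃ j, π (p j) = m ∧ wdistSet X (p i) (p j) ≤ R := by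
  obtain ⟨j₁, -, hj₁i, hj₁⟩ := exists_eq_of_between_of_step_le_one hπ hp.1 (Fin.zero_le i) h₁
  obtain ⟨j₂, hij₂, -, hj₂⟩ := exists_eq_of_between_of_step_le_one hπ hp.1 (Fin.le_last i) h₂
  refine ⟨j₁, hj₁, ?_⟩
  have hj₁i' : (j₁ : ℕ) ≤ i := hj₁i
  have hij₂' : (i : ℕ) ≤ j₂ := hij₂
  calc wdistSet X (p i) (p j₁) = wdistSet X (p j₁) (p i) := wdistSet_comm hgen _ _
    _ ≤ i - j₁ := wdistSet_le_sub_of_step_le_one hgen hp.1 hj₁i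
    _ ≤ j₂ - j₁ := by omega
    _ = wdistSet X (p j₁) (p j₂) := (hp.wdistSet_eq hgen (hj₁i.trans hij₂)).symm
    _ ≤ R := hfib _ _ (hj₁.trans hj₂.symm)

theorem IsGeodesicSet.thinAtSet_of_isTree (hT : T.IsTree) (hgen : Subgroup.closure X = ⊤)
    (hπ : ∀ g h, wdistSet X g h ≤ 1 → π g = π h ∨ T.Adj (π g) (π h))
    (hfib : ∀ g h, π g = π h → wdistSet X g h ≤ R) {n₁ n₂ n₃ : ℕ} {p : Fin (n₁ + 1) → G}
    {q : Fin (n₂ + 1) → G} {r : Fin (n₃ + 1) → G} (hp : IsGeodesicSet X p)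
    (hq : ∀ k : Fin n₂, wdistSet X (q k.castSucc) (q k.succ) ≤ 1)
    (hr : ∀ k : Fin n₃, wdistSet X (r k.castSucc) (r k.succ) ≤ 1)
    (hpq : p (Fin.last n₁) = q 0) (hqr : q (Fin.last n₂) = r 0) (hrp : r (Fin.last n₃) = p 0) :
    ThinAtSet X ((2 * R : ℕ) : ℝ) p (Set.range q ∪ Set.range r) := by
  intro i
  obtain ⟨m, hab, ham, hmb⟩ := hT.exists_median (π (p 0)) (π (p (Fin.last n₁))) (π (p i))
  obtain ⟨j, hj, hij⟩ := hp.exists_eq_wdistSet_le hgen hπ hfib i ham hmb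
  have close : ∀ g, π g = m → (wdistSet X (p i) g : ℝ) ≤ (2 * R : ℕ) := fun g hg => by
    have := wdistSet_triangle hgen (p i) (p j) g
    have := hfib _ _ (hj.trans hg.symm)
    exact_mod_cast (by omega)
  rcases hab.or_between (π (r 0)) with h | h
  · obtain ⟨k, -, -, hk⟩ := exists_eq_of_between_of_step_le_one hπ hr (Fin.zero_le (Fin.last _))
      (by rw [hrp]; exact h.symm)
    exact ⟨r k, Or.inr ⟨k, rfl⟩, close _ hk⟩
  · obtain ⟨k, -, -, hk⟩ := exists_eq_of_between_of_step_le_one hπ hq (Fin.zero_le (Fin.last _))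
      (by rw [← hpq, hqr]; exact h.symm)
    exact ⟨q k, Or.inl ⟨k, rfl⟩, close _ hk⟩

theorem hypConstSet_of_isTree (hT : T.IsTree) (hgen : Subgroup.closure X = ⊤)
    (hπ : ∀ g h, wdistSet X g h ≤ 1 → π g = π h ∨ T.Adj (π g) (π h))
    (hfib : ∀ g h, π g = π h → wdistSet X g h ≤ R) : HypConstSet X ((2 * R : ℕ) : ℝ) := by
  intro n₁ n₂ n₃ p q r hp hq hr hpq hqr hrp
  exact ⟨hp.thinAtSet_of_isTree hT hgen hπ hfib hq.1 hr.1 hpq hqr hrp,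
    hq.thinAtSet_of_isTree hT hgen hπ hfib hr.1 hp.1 hqr hrp hpq,
    hr.thinAtSet_of_isTree hT hgen hπ hfib hp.1 hq.1 hrp hpq hqr⟩

end TreeProjection

/-- Let `G` act by automorphisms on a simplicial tree `T`, let `v` be a
vertex such that `d_T(v, x·v) ≤ 1` for every generator `x ∈ X ∪ X⁻¹` and such that the
stabilizer of `v` is finite. Then `Cay(G,X)` is `δ`-hyperbolic for
`δ = 2·Rad_X(Stab_G(v))`. -/
theorem cayley_hyperbolic_of_action_on_tree {V : Type*} (T : SimpleGraph V)
    (hT : T.IsTree) {G : Type*} [Group G] (ρ : G →* Equiv.Perm V)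
    (hadj : ∀ (g : G) (a b : V), T.Adj a b → T.Adj (ρ g a) (ρ g b))
    (v : V) (X : Set G) (hgen : Subgroup.closure X = ⊤)
    (hd : ∀ x : G, (x ∈ X ∨ x⁻¹ ∈ X) → T.dist v (ρ x v) ≤ 1)
    (hstab : {g : G | ρ g v = v}.Finite) :
    HypConstSet X ((2 * RadSet X {g : G | ρ g v = v} : ℕ) : ℝ) := by
  refine hypConstSet_of_isTree hT hgen (π := fun g => ρ g v)
    (fun g h hgh => ?_) (fun g h hgh => ?_)
  · rcases eq_or_exists_eq_mul_of_wdistSet_le_one hgen hgh with rfl | ⟨x, hx, rfl⟩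
    · exact Or.inl rfl
    have hxv : v = ρ x v ∨ T.Adj v (ρ x v) :=
      (hT.connected.preconnected _ _).eq_or_adj_of_dist_le_one (hd x hx)
    rw [map_mul, Equiv.Perm.mul_apply]
    exact hxv.imp (congrArg (ρ g)) (hadj g _ _)
  · refine le_csSup (hstab.image _).bddAbove ⟨g⁻¹ * h, ?_, rfl⟩
    simp [← hgh]

end IsoSpecPaper
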